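/- arXiv:2412.15561 — 8 statements merged into one kernel-verified Lean document; each statement's English description precedes it below -/
import Mathlib

section
/- Let O, A, B, C, D be points in the plane ℝ². If the oriented triangles (A,O,B), (A,O,D), (B,O,C), (C,O,D) all have positive orientation, then (A,O,C) has positive orientation if and only if (B,O,D) has positive orientation. -/
/-- 2×2 determinant of two vectors in ℝ². -/
def det2 (u v : ℝ × ℝ) : ℝ := u.1 * v.2 - u.2 * v.1

/-- Orientation of an ordered triple of points in ℝ². -/
def ori (A B C : ℝ × ℝ) : ℝ := det2 (B - A) (C - B)

/-! Expanding the orientations around the common apex `O` turns them into determinants of the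
vectors `A - O`, …, `D - O`, which satisfy the Grassmann–Plücker relation
`[AC][BD] = [AB][CD] + [AD][BC]`. Under the hypotheses the right-hand side is positive, so
`ori A O C` and `ori B O D` have the same sign. -/

theorem det2_mul_det2_plucker (u v w x : ℝ × ℝ) :
    det2 u w * det2 v x = det2 u v * det2 w x + det2 u x * det2 v w := by
  simp only [det2]
  ring

theorem ori_apex_eq_neg_det2 (X O Y : ℝ × ℝ) : ori X O Y = -det2 (X - O) (Y - O) := by
  simp only [ori, det2, Prod.fst_sub, Prod.snd_sub]
  ring

theorem ori_mul_ori_plucker (O A B C D : ℝ × ℝ) :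
    ori A O C * ori B O D = ori A O B * ori C O D + ori A O D * ori B O C := by
  simp only [ori_apex_eq_neg_det2]
  linear_combination det2_mul_det2_plucker (A - O) (B - O) (C - O) (D - O)

theorem stmt0 (O A B C D : ℝ × ℝ)
    (hAOB : 0 < ori A O B) (hAOD : 0 < ori A O D)
    (hBOC : 0 < ori B O C) (hCOD : 0 < ori C O D) :
    0 < ori A O C ↔ 0 < ori B O D := by
  have hprod : 0 < ori A O C * ori B O D := by
    rw [ori_mul_ori_plucker]
    positivity
  exact pos_iff_pos_of_mul_pos hprod
end

section
/- Let V₁, V₂, V₃ ∈ ℝ² be affinely independent with W in the interior of triangle (V₁,V₂,V₃). Then (V₁,V₂,V₃) is positively oriented if and only if det(V₂ - V₁, V₃ - W) > 0. -/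
/- Writing W = l₁V₁ + l₂V₂ + l₃V₃ with l₁ + l₂ + l₃ = 1 gives V₃ - W = l₁(V₃ - V₁) + l₂(V₃ - V₂),
and both det(V₂ - V₁, V₃ - V₁) and det(V₂ - V₁, V₃ - V₂) equal 𝒪(V₁, V₂, V₃). Hence
det(V₂ - V₁, V₃ - W) = (l₁ + l₂) 𝒪(V₁, V₂, V₃), and l₁ + l₂ > 0. -/

theorem det2_sub_affineCombination (A B C : ℝ × ℝ) {l₁ l₂ l₃ : ℝ} (hsum : l₁ + l₂ + l₃ = 1) :
    det2 (B - A) (C - (l₁ • A + l₂ • B + l₃ • C)) = (l₁ + l₂) * ori A B C := by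
  obtain rfl : l₃ = 1 - l₁ - l₂ := by linarith
  simp only [ori, det2, Prod.fst_sub, Prod.snd_sub, Prod.fst_add, Prod.snd_add, Prod.smul_fst,
    Prod.smul_snd, smul_eq_mul]
  ring

theorem stmt3_general (V₁ V₂ V₃ W : ℝ × ℝ)
    (hW : ∃ l₁ l₂ l₃ : ℝ, l₁ ∈ Set.Ioo (0:ℝ) 1 ∧ l₂ ∈ Set.Ioo (0:ℝ) 1 ∧
      l₃ ∈ Set.Ioo (0:ℝ) 1 ∧ l₁ + l₂ + l₃ = 1 ∧ W = l₁ • V₁ + l₂ • V₂ + l₃ • V₃) :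
    0 < ori V₁ V₂ V₃ ↔ 0 < det2 (V₂ - V₁) (V₃ - W) := by
  obtain ⟨l₁, l₂, l₃, hl₁, hl₂, -, hsum, rfl⟩ := hW
  rw [det2_sub_affineCombination V₁ V₂ V₃ hsum, mul_pos_iff_of_pos_left (by linarith [hl₁.1, hl₂.1])]

theorem stmt3 (V₁ V₂ V₃ W : ℝ × ℝ)
    (hindep : AffineIndependent ℝ ![V₁, V₂, V₃])
    (hW : ∃ l₁ l₂ l₃ : ℝ, l₁ ∈ Set.Ioo (0:ℝ) 1 ∧ l₂ ∈ Set.Ioo (0:ℝ) 1 ∧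
      l₃ ∈ Set.Ioo (0:ℝ) 1 ∧ l₁ + l₂ + l₃ = 1 ∧ W = l₁ • V₁ + l₂ • V₂ + l₃ • V₃) :
    0 < ori V₁ V₂ V₃ ↔ 0 < det2 (V₂ - V₁) (V₃ - W) :=
  stmt3_general V₁ V₂ V₃ W hW
end

section
/- Let P : ℤ → ℝ² satisfy: for all i ≥ N, the triples (Pᵢ, Pᵢ₊₁, Pᵢ₊₂) and (Pᵢ, Pᵢ₊₁, Pᵢ₊ₖ₊₁) are positively oriented and Pᵢ₊ₖ lies in the interior of triangle (Pᵢ, Pᵢ₊₁, Pᵢ₊ₖ₊₁) (type-α spiral condition with k ≥ 3). Then for all i > N, the triple (Pᵢ, Pᵢ₊ₖ, Pᵢ₊₂ₖ) is positively oriented. -/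
def inTriangle (A B C W : ℝ × ℝ) : Prop :=
  ∃ l₁ l₂ l₃ : ℝ, l₁ ∈ Set.Ioo (0:ℝ) 1 ∧ l₂ ∈ Set.Ioo (0:ℝ) 1 ∧
    l₃ ∈ Set.Ioo (0:ℝ) 1 ∧ l₁ + l₂ + l₃ = 1 ∧ W = l₁ • A + l₂ • B + l₃ • C

/-
Put the origin at `O = P (i+k)` and write `d = P (i+2k) - O`, `b = P (i+k-1) - O`,
`a = P i - O`, `c = P (i+k+1) - O`. The spiral condition at the indices `i-1`, `i`, `i+k-1`
and `i+k` says that `d`, `b`, `a` all lie strictly on the left of `c`, in this angular order.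
Inside an open half-plane the angular order is transitive, so `a` lies on the left of `d`,
which is the claim. Transitivity is the Plücker identity
`det(c,b) det(d,a) = det(c,d) det(b,a) + det(c,a) det(d,b)`.
-/

lemma ori_rotate (A B C : ℝ × ℝ) : ori A B C = ori B C A := by
  simp only [ori, det2, Prod.fst_sub, Prod.snd_sub]
  ring

lemma ori_eq_det2_sub (X O Z : ℝ × ℝ) : ori X O Z = det2 (Z - O) (X - O) := by
  simp only [ori, det2, Prod.fst_sub, Prod.snd_sub]
  ring

lemma ori_convex_combination {l₁ l₂ l₃ : ℝ} (A B C : ℝ × ℝ) (h : l₁ + l₂ + l₃ = 1) :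
    ori A B (l₁ • A + l₂ • B + l₃ • C) = l₃ * ori A B C := by
  obtain rfl : l₁ = 1 - l₂ - l₃ := by linarith
  simp only [ori, det2, Prod.fst_sub, Prod.snd_sub, Prod.fst_add, Prod.snd_add,
    Prod.smul_fst, Prod.smul_snd, smul_eq_mul]
  ring

lemma ori_pos_of_inTriangle {A B C W : ℝ × ℝ} (hT : 0 < ori A B C) (h : inTriangle A B C W) :
    0 < ori A B W ∧ 0 < ori B C W ∧ 0 < ori C A W := by
  obtain ⟨l₁, l₂, l₃, h₁, h₂, h₃, hsum, rfl⟩ := h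
  refine ⟨?_, ?_, ?_⟩
  · rw [ori_convex_combination A B C hsum]
    exact mul_pos h₃.1 hT
  · rw [show l₁ • A + l₂ • B + l₃ • C = l₂ • B + l₃ • C + l₁ • A by abel,
      ori_convex_combination B C A (by linarith), ← ori_rotate A B C]
    exact mul_pos h₁.1 hT
  · rw [show l₁ • A + l₂ • B + l₃ • C = l₃ • C + l₁ • A + l₂ • B by abel,
      ori_convex_combination C A B (by linarith), ori_rotate C A B]
    exact mul_pos h₂.1 hT

lemma det2_plucker (c u v w : ℝ × ℝ) :
    det2 c v * det2 u w = det2 c u * det2 v w + det2 c w * det2 u v := by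
  simp only [det2]
  ring

lemma det2_pos_trans {c u v w : ℝ × ℝ} (hu : 0 < det2 c u) (hv : 0 < det2 c v)
    (hw : 0 < det2 c w) (huv : 0 < det2 u v) (hvw : 0 < det2 v w) : 0 < det2 u w := by
  have : 0 < det2 c v * det2 u w := by
    rw [det2_plucker]
    positivity
  exact pos_of_mul_pos_right this hv.le

theorem stmt8 (P : ℤ → ℝ × ℝ) (k N : ℤ) (hk : 3 ≤ k)
    (hspiral : ∀ i ≥ N, 0 < ori (P i) (P (i+1)) (P (i+2)) ∧
      0 < ori (P i) (P (i+1)) (P (i+k+1)) ∧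
      inTriangle (P i) (P (i+1)) (P (i+k+1)) (P (i+k))) :
    ∀ i > N, 0 < ori (P i) (P (i+k)) (P (i+2*k)) := by
  intro i hi
  obtain ⟨-, hA, hA'⟩ := hspiral (i-1) (by omega)
  obtain ⟨-, hB, hB'⟩ := hspiral i (by omega)
  obtain ⟨hcb, hdb, -⟩ := hspiral (i+k-1) (by omega)
  obtain ⟨-, hD, hD'⟩ := hspiral (i+k) (by omega)
  simp only [show i-1+1 = i by ring, show i-1+k = i+k-1 by ring,
    show i+k-1+1 = i+k by ring, show i+k-1+k+1 = i+2*k by ring, show i+k-1+2 = i+k+1 by ring,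
    show i+k+k = i+2*k by ring] at hA hA' hcb hdb hD hD'
  have hba := (ori_pos_of_inTriangle hA hA').2.1
  have hca := (ori_pos_of_inTriangle hB hB').2.2
  have hcd := (ori_pos_of_inTriangle hD hD').1
  rw [ori_rotate] at hca
  rw [ori_rotate, ori_rotate] at hcd
  rw [ori_eq_det2_sub] at hba hca hcd hcb hdb ⊢
  exact det2_pos_trans hcd hcb hca hdb hba
end

section
/- Let P : ℤ → ℝ² satisfy: for all i ≥ N, the triples (Pᵢ, Pᵢ₊₁, Pᵢ₊₂) and (Pᵢ, Pᵢ₊₁, Pᵢ₊ₖ) are positively oriented and Pᵢ₊ₖ₊₁ lies in the interior of triangle (Pᵢ, Pᵢ₊₁, Pᵢ₊ₖ) (type-β spiral condition with k ≥ 3). Then for all i > N, the triple (Pᵢ₊₂ₖ, Pᵢ₊ₖ, Pᵢ) is positively oriented. -/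
/-!
Write `A = Pᵢ`, `U = Pᵢ₊ₖ₋₁`, `V = Pᵢ₊ₖ`, `B = Pᵢ₊ₖ₊₁`, `Z = Pᵢ₊₂ₖ` and look at the rays
leaving `V`. A point strictly inside a positively oriented triangle lies strictly to the left of
each of its edges; applied to the interior conditions at `i - 1`, `i` and `i + k - 1`, and together
with the orientation conditions at `i + k - 1` and `i + k`, this shows that the rays `VA`, `VB`,
`VZ`, `VU` turn counterclockwise in this order within a half-turn. Hence `VZ` is counterclockwise
from `VA`, which is the claim; the last step is a Grassmann–Plücker identity.
-/

lemma ori_coords (A B C : ℝ × ℝ) :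
    ori A B C = (B.1 - A.1) * (C.2 - B.2) - (B.2 - A.2) * (C.1 - B.1) := rfl

lemma ori_self_left (A B : ℝ × ℝ) : ori A B A = 0 := by
  simp only [ori_coords]; ring

lemma ori_self_right (A B : ℝ × ℝ) : ori A B B = 0 := by
  simp only [ori_coords]; ring

lemma ori_smul_add_smul_add_smul (X Y A B C : ℝ × ℝ) {l₁ l₂ l₃ : ℝ} (h : l₁ + l₂ + l₃ = 1) :
    ori X Y (l₁ • A + l₂ • B + l₃ • C)
      = l₁ * ori X Y A + l₂ * ori X Y B + l₃ * ori X Y C := by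
  obtain rfl : l₂ = 1 - l₁ - l₃ := by linarith
  simp only [ori_coords, Prod.fst_add, Prod.snd_add, Prod.smul_fst, Prod.smul_snd, smul_eq_mul]
  ring

lemma ori_plucker (V A B Z U : ℝ × ℝ) :
    ori V A Z * ori V B U = ori V A B * ori V Z U + ori V A U * ori V B Z := by
  simp only [ori_coords]; ring

lemma ori_pos_of_sector {V A B Z U : ℝ × ℝ} (hAB : 0 < ori V A B) (hAU : 0 < ori V A U)
    (hBU : 0 < ori V B U) (hBZ : 0 < ori V B Z) (hZU : 0 < ori V Z U) : 0 < ori V A Z := by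
  have hprod : 0 < ori V A Z * ori V B U := by
    rw [ori_plucker]; positivity
  exact pos_of_mul_pos_left hprod hBU.le

namespace inTriangle

lemma rotate {A B C W : ℝ × ℝ} (h : inTriangle A B C W) : inTriangle B C A W := by
  obtain ⟨l₁, l₂, l₃, h₁, h₂, h₃, hsum, rfl⟩ := h
  exact ⟨l₂, l₃, l₁, h₂, h₃, h₁, by linarith, by abel⟩

lemma ori_pos {A B C W : ℝ × ℝ} (h : inTriangle A B C W) (hABC : 0 < ori A B C) :
    0 < ori A B W := by
  obtain ⟨l₁, l₂, l₃, -, -, ⟨hl₃, -⟩, hsum, rfl⟩ := h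
  rw [ori_smul_add_smul_add_smul A B A B C hsum, ori_self_left, ori_self_right]
  simpa using mul_pos hl₃ hABC

end inTriangle

lemma ori_pos_of_spiral_window {P₀ A A₁ U V B W Z : ℝ × ℝ}
    (hP₀AU : 0 < ori P₀ A U) (hV : inTriangle P₀ A U V)
    (hAA₁V : 0 < ori A A₁ V) (hB : inTriangle A A₁ V B)
    (hUVB : 0 < ori U V B) (hUVW : 0 < ori U V W) (hZ : inTriangle U V W Z)
    (hVBZ : 0 < ori V B Z) : 0 < ori Z V A := by
  have hAUV : 0 < ori A U V := hV.rotate.ori_pos (by rwa [ori_rotate] at hP₀AU)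
  have hVAB : 0 < ori V A B := hB.rotate.rotate.ori_pos (by rwa [ori_rotate, ori_rotate] at hAA₁V)
  have hUVZ : 0 < ori U V Z := hZ.ori_pos hUVW
  rw [ori_rotate]
  refine ori_pos_of_sector (U := U) hVAB ?_ ?_ hVBZ ?_
  · rwa [ori_rotate, ori_rotate] at hAUV
  · rwa [ori_rotate] at hUVB
  · rwa [ori_rotate] at hUVZ

theorem stmt9 (P : ℤ → ℝ × ℝ) (k N : ℤ) (hk : 3 ≤ k)
    (hspiral : ∀ i ≥ N, 0 < ori (P i) (P (i+1)) (P (i+2)) ∧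
      0 < ori (P i) (P (i+1)) (P (i+k)) ∧
      inTriangle (P i) (P (i+1)) (P (i+k)) (P (i+k+1))) :
    ∀ i > N, 0 < ori (P (i+2*k)) (P (i+k)) (P i) := by
  intro i hi
  obtain ⟨-, hprev, hV⟩ := hspiral (i - 1) (by omega)
  obtain ⟨-, hcur, hB⟩ := hspiral i (by omega)
  obtain ⟨hUVB, hUVW, hZ⟩ := hspiral (i + k - 1) (by omega)
  obtain ⟨-, hVBZ, -⟩ := hspiral (i + k) (by omega)
  simp only [show i - 1 + 1 = i by omega, show i - 1 + k = i + k - 1 by omega,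
    show i + k - 1 + 1 = i + k by omega, show i + k - 1 + 2 = i + k + 1 by omega,
    show i + k - 1 + k = i + 2 * k - 1 by omega, show i + 2 * k - 1 + 1 = i + 2 * k by omega,
    show i + k + k = i + 2 * k by omega] at hprev hV hUVB hUVW hZ hVBZ
  exact ori_pos_of_spiral_window hprev hV hcur hB hUVB hUVW hZ hVBZ
end

section
/- Define the inverse cross ratio of four reals by χ(a,b,c,d) = (a−b)(c−d)/((a−c)(b−d)). Let the birational map on 2n-periodic sequences (xⱼ)ⱼ∈ℤ/2n be given by x'₂ᵢ = x₂ᵢ₋₂ · (x₂ᵢ₋₄ + x₂ᵢ₋₁ − 1)/(x₂ᵢ₋₂x₂ᵢ₋₁ − (1 − x₂ᵢ₊₁)(1 − x₂ᵢ₋₄)) and x'₂ᵢ₊₁ = x₂ᵢ₊₃ · (x₂ᵢ₊₂ + x₂ᵢ₊₅ − 1)/(x₂ᵢ₊₂x₂ᵢ₊₃ − (1 − x₂ᵢ₊₅)(1 − x₂ᵢ)). Then the quantity 𝓕₃ = ∏ᵢ₌₀ⁿ⁻¹ x₂ᵢ/x₂ᵢ₊₁ is invariant: ∏ᵢ x'₂ᵢ/x'₂ᵢ₊₁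 = ∏ᵢ x₂ᵢ/x₂ᵢ₊₁, provided all denominators involved are nonzero. -/
/-!
With `N i = x(2i-4) + x(2i-1) - 1` and `D i` the denominator of `x'_{2i}`, the map reads
`x'_{2i} = x(2i-2) N(i) / D(i)` and `x'_{2i+1} = x(2i+3) N(i+3) / D(i+2)`. So each ratio
`x'_{2i} / x'_{2i+1}` is a product of index shifts of `n`-periodic sequences; over a full period
the `N`'s and `D`'s cancel, and the shifts `x(2i-2) ↦ x(2i)`, `x(2i+3) ↦ x(2i+1)` leave
`∏ x(2i) / x(2i+1)`.
-/

open Finset Function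

theorem Function.Periodic.prod_range_add_one {M : Type*} [CommMonoid M] {f : ℤ → M} {n : ℕ}
    (hf : Periodic f n) : ∏ i ∈ range n, f (i + 1) = ∏ i ∈ range n, f i := by
  cases n with
  | zero => simp
  | succ m =>
    rw [prod_range_succ, prod_range_succ']
    simp only [Nat.cast_add, Nat.cast_one, Nat.cast_zero]
    rw [show f (m + 1) = f 0 by simpa using hf 0]

theorem Function.Periodic.prod_range_add_nat {M : Type*} [CommMonoid M] {f : ℤ → M} {n : ℕ}
    (hf : Periodic f n) (k : ℕ) : ∏ i ∈ range n, f (i + k) = ∏ i ∈ range n, f i := by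
  induction k with
  | zero => simp
  | succ k ih =>
    simpa only [Nat.cast_succ, ← add_assoc, add_right_comm _ (k : ℤ) 1] using
      (hf.add_const (k : ℤ)).prod_range_add_one.trans ih

theorem Function.Periodic.comp_two_mul_add {β : Type*} {x : ℤ → β} {n : ℤ}
    (hx : Periodic x (2 * n)) (c : ℤ) : Periodic (fun i => x (2 * i + c)) n := fun i => by
  simpa only [mul_add, add_right_comm] using hx (2 * i + c)

section DeepDiagonalMap

variable {K : Type*} [Field K] (x : ℤ → K)

def cornerNum (i : ℤ) : K := x (2*i-4) + x (2*i-1) - 1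

def cornerDen (i : ℤ) : K :=
  x (2*i-2) * x (2*i-1) - (1 - x (2*i+1)) * (1 - x (2*i-4))

/-- The coordinate `x'_{2i}` of `T₃ x`. -/
def t3Even (i : ℤ) : K := x (2*i-2) * cornerNum x i / cornerDen x i

/-- The coordinate `x'_{2i+1}` of `T₃ x`. -/
def t3Odd (i : ℤ) : K := x (2*i+3) * cornerNum x (i+3) / cornerDen x (i+2)

theorem t3Odd_eq (i : ℤ) : t3Odd x i =
    x (2*i+3) * (x (2*i+2) + x (2*i+5) - 1)
      / (x (2*i+2) * x (2*i+3) - (1 - x (2*i+5)) * (1 - x (2*i))) := by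
  simp only [t3Odd, cornerNum, cornerDen]
  ring_nf

variable {x}

-- Division by zero yields zero, so a nonzero `t3Odd` certifies a nonzero denominator as well.
theorem cornerNum_ne_zero (h : ∀ i, t3Odd x i ≠ 0) (i : ℤ) : cornerNum x i ≠ 0 := by
  simpa using right_ne_zero_of_mul (div_ne_zero_iff.1 (h (i - 3))).1

theorem cornerDen_ne_zero (h : ∀ i, t3Odd x i ≠ 0) (i : ℤ) : cornerDen x i ≠ 0 := by
  simpa using (div_ne_zero_iff.1 (h (i - 2))).2

variable {n : ℕ}

theorem periodic_cornerNum (hx : Periodic x (2 * n)) : Periodic (cornerNum x) n :=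
  fun i => by simp only [cornerNum, mul_add, sub_eq_add_neg, add_right_comm _ (2 * (n : ℤ)), hx _]

theorem periodic_cornerDen (hx : Periodic x (2 * n)) : Periodic (cornerDen x) n :=
  fun i => by simp only [cornerDen, mul_add, sub_eq_add_neg, add_right_comm _ (2 * (n : ℤ)), hx _]

theorem prod_range_t3Even_div_t3Odd (hx : Periodic x (2 * n)) (h : ∀ i, t3Odd x i ≠ 0) :
    ∏ i ∈ range n, t3Even x i / t3Odd x i = ∏ i ∈ range n, x (2*i) / x (2*i+1) := by
  have hE : ∏ i ∈ range n, x (2*(i:ℤ)-2) = ∏ i ∈ range n, x (2*(i:ℤ)) := by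
    simpa [mul_add, ← sub_eq_add_neg] using ((hx.comp_two_mul_add (-2)).prod_range_add_nat 1).symm
  have hO : ∏ i ∈ range n, x (2*(i:ℤ)+3) = ∏ i ∈ range n, x (2*(i:ℤ)+1) := by
    simpa [mul_add, add_assoc] using (hx.comp_two_mul_add 1).prod_range_add_nat 1
  have hN : ∏ i ∈ range n, cornerNum x (i+3) = ∏ i ∈ range n, cornerNum x i := by
    simpa using (periodic_cornerNum hx).prod_range_add_nat 3
  have hD : ∏ i ∈ range n, cornerDen x (i+2) = ∏ i ∈ range n, cornerDen x i := by
    simpa using (periodic_cornerDen hx).prod_range_add_nat 2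
  have hN0 : ∏ i ∈ range n, cornerNum x i ≠ 0 :=
    prod_ne_zero_iff.2 fun i _ => cornerNum_ne_zero h i
  have hD0 : ∏ i ∈ range n, cornerDen x i ≠ 0 :=
    prod_ne_zero_iff.2 fun i _ => cornerDen_ne_zero h i
  simp only [t3Even, t3Odd, div_div_div_eq, prod_div_distrib, prod_mul_distrib, hE, hO, hN, hD]
  field_simp

end DeepDiagonalMap

theorem stmt13_general (n : ℕ) (x x' : ℤ → ℝ)
    (hper : ∀ j : ℤ, x (j + 2*n) = x j)
    (hx'_odd : ∀ i : ℤ, x' (2*i+1) ≠ 0)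
    (heven : ∀ i : ℤ, x' (2*i) =
      x (2*i-2) * (x (2*i-4) + x (2*i-1) - 1)
        / (x (2*i-2) * x (2*i-1) - (1 - x (2*i+1)) * (1 - x (2*i-4))))
    (hodd : ∀ i : ℤ, x' (2*i+1) =
      x (2*i+3) * (x (2*i+2) + x (2*i+5) - 1)
        / (x (2*i+2) * x (2*i+3) - (1 - x (2*i+5)) * (1 - x (2*i)))) :
    ∏ i ∈ Finset.range n, x' (2*i) / x' (2*i+1)
      = ∏ i ∈ Finset.range n, x (2*i) / x (2*i+1) := by
  have hx'_odd_eq (i : ℤ) : x' (2*i+1) = t3Odd x i := (hodd i).trans (t3Odd_eq x i).symm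
  calc ∏ i ∈ range n, x' (2*i) / x' (2*i+1)
      = ∏ i ∈ range n, t3Even x i / t3Odd x i :=
        prod_congr rfl fun i _ => by rw [heven, hx'_odd_eq]; rfl
    _ = ∏ i ∈ range n, x (2*i) / x (2*i+1) :=
        prod_range_t3Even_div_t3Odd hper fun i => hx'_odd_eq i ▸ hx'_odd i

theorem stmt13 (n : ℕ) (hn : 2 ≤ n) (x x' : ℤ → ℝ)
    (hper : ∀ j : ℤ, x (j + 2*n) = x j)
    (hdenom_even : ∀ i : ℤ,
      x (2*i-2) * x (2*i-1) - (1 - x (2*i+1)) * (1 - x (2*i-4)) ≠ 0)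
    (hdenom_odd : ∀ i : ℤ,
      x (2*i+2) * x (2*i+3) - (1 - x (2*i+5)) * (1 - x (2*i)) ≠ 0)
    (hx_odd : ∀ i : ℤ, x (2*i+1) ≠ 0)
    (hx'_odd : ∀ i : ℤ, x' (2*i+1) ≠ 0)
    (heven : ∀ i : ℤ, x' (2*i) =
      x (2*i-2) * (x (2*i-4) + x (2*i-1) - 1)
        / (x (2*i-2) * x (2*i-1) - (1 - x (2*i+1)) * (1 - x (2*i-4))))
    (hodd : ∀ i : ℤ, x' (2*i+1) =
      x (2*i+3) * (x (2*i+2) + x (2*i+5) - 1)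
        / (x (2*i+2) * x (2*i+3) - (1 - x (2*i+5)) * (1 - x (2*i)))) :
    ∏ i ∈ Finset.range n, x' (2*i) / x' (2*i+1)
      = ∏ i ∈ Finset.range n, x (2*i) / x (2*i+1) :=
  stmt13_general n x x' hper hx'_odd heven hodd
end

section
/- With the T₃ coordinate map x'₂ᵢ = x₂ᵢ₋₂(x₂ᵢ₋₄ + x₂ᵢ₋₁ − 1)/(x₂ᵢ₋₂x₂ᵢ₋₁ − (1−x₂ᵢ₊₁)(1−x₂ᵢ₋₄)), x'₂ᵢ₊₁ = x₂ᵢ₊₃(x₂ᵢ₊₂ + x₂ᵢ₊₅ − 1)/(x₂ᵢ₊₂x₂ᵢ₊₃ − (1−x₂ᵢ₊₅)(1−x₂ᵢ)) on 2n-periodic sequences, the quantity 𝓕₁ = ∏ᵢ₌₀ⁿ⁻¹ x₂ᵢ/(x₂ᵢ − 1) satisfies ∏ᵢ x'₂ᵢ/(x'₂ᵢ − 1) = ∏ᵢ x₂ᵢ/(x₂ᵢ − 1), provided all denominators are nonzero. -/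
/-!
Write `F j = x (2j-2) + x (2j+1) - 1`. Since the numerator of `x' (2j)` minus its denominator
factors as `(x (2j-4) - 1) · F j`, the factor `x' (2j) / (x' (2j) - 1)` equals
`x (2j-2) F (j-1) / ((x (2j-4) - 1) F j)`. Over a full period the quotients `F (j-1) / F j`
telescope away, and the shifted products of `x (2j-2)` and `x (2j-4) - 1` equal the unshifted ones.
-/

open Finset Function

namespace Function.Periodic

variable {M : Type*} [CommMonoid M] {g : ℤ → M} {n : ℕ}

lemma prod_range_add_one_s14 (hg : Periodic g n) :
    ∏ i ∈ range n, g (i + 1) = ∏ i ∈ range n, g i := by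
  cases n with
  | zero => simp
  | succ m =>
    rw [prod_range_succ, prod_range_succ']
    congr 1
    simpa using hg 0

lemma prod_range_add (hg : Periodic g n) (c : ℤ) :
    ∏ i ∈ range n, g (i + c) = ∏ i ∈ range n, g i := by
  induction c using Int.induction_on with
  | zero => simp
  | succ k ih =>
    rw [← ih, ← (hg.add_const k).prod_range_add_one_s14]
    exact prod_congr rfl fun i _ => congrArg g (by ring)
  | pred k ih =>
    rw [← ih, ← (hg.add_const (-k - 1)).prod_range_add_one_s14]
    exact prod_congr rfl fun i _ => congrArg g (by ring)

lemma prod_range_sub (hg : Periodic g n) (c : ℤ) :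
    ∏ i ∈ range n, g (i - c) = ∏ i ∈ range n, g i := by
  simpa only [sub_eq_add_neg] using hg.prod_range_add (-c)

lemma prod_range_mul_div_sub_one {K : Type*} [Field K] {g : ℤ → K}
    (hg : Periodic g n) (hg0 : ∀ i, g i ≠ 0) (f : ℕ → K) :
    ∏ i ∈ range n, f i * g (i - 1) / g i = ∏ i ∈ range n, f i := by
  rw [prod_div_distrib, prod_mul_distrib, hg.prod_range_sub 1,
    mul_div_assoc, div_self (prod_ne_zero_iff.mpr fun (i : ℕ) _ => hg0 i), mul_one]

end Function.Periodic

lemma t3_coord_sub_one {K : Type*} [Field K] {a b c d : K}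
    (hD : b * c - (1 - d) * (1 - a) ≠ 0) :
    b * (a + c - 1) / (b * c - (1 - d) * (1 - a)) - 1
      = (a - 1) * (b + d - 1) / (b * c - (1 - d) * (1 - a)) := by
  rw [div_sub_one hD]
  ring_nf

theorem stmt14_general (n : ℕ) (x x' : ℤ → ℝ)
    (hper : ∀ j : ℤ, x (j + 2*n) = x j)
    (hdenom_even : ∀ i : ℤ,
      x (2*i-2) * x (2*i-1) - (1 - x (2*i+1)) * (1 - x (2*i-4)) ≠ 0)
    (hx'_even : ∀ i : ℤ, x' (2*i) - 1 ≠ 0)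
    (heven : ∀ i : ℤ, x' (2*i) =
      x (2*i-2) * (x (2*i-4) + x (2*i-1) - 1)
        / (x (2*i-2) * x (2*i-1) - (1 - x (2*i+1)) * (1 - x (2*i-4)))) :
    ∏ i ∈ Finset.range n, x' (2*i) / (x' (2*i) - 1)
      = ∏ i ∈ Finset.range n, x (2*i) / (x (2*i) - 1) := by
  set F : ℤ → ℝ := fun j => x (2*j-2) + x (2*j+1) - 1 with hF
  have hsub_one : ∀ j : ℤ, x' (2*j) - 1 = (x (2*j-4) - 1) * F j
      / (x (2*j-2) * x (2*j-1) - (1 - x (2*j+1)) * (1 - x (2*j-4))) := fun j => by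
    rw [heven j]; exact t3_coord_sub_one (hdenom_even j)
  have hF0 : ∀ j, F j ≠ 0 := fun j hj => hx'_even j (by rw [hsub_one j, hj, mul_zero, zero_div])
  have hfactor : ∀ j : ℤ, x' (2*j) / (x' (2*j) - 1)
      = x (2*(j-1)) / (x (2*(j-2)) - 1) * F (j-1) / F j := fun j => by
    rw [hsub_one j, heven j, div_div_div_cancel_right₀ (hdenom_even j), div_mul_eq_mul_div,
      div_div, hF]
    ring_nf
  have hx2per : Periodic (fun j : ℤ => x (2*j)) n := fun j => by
    simp only [mul_add, hper]
  have hFper : Periodic F n := fun j => by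
    simp only [hF, show 2 * (j + n) - 2 = 2*j - 2 + 2*n by ring,
      show 2 * (j + n) + 1 = 2*j + 1 + 2*n by ring, hper]
  calc ∏ i ∈ range n, x' (2*i) / (x' (2*i) - 1)
      = ∏ i ∈ range n, x (2*((i:ℤ)-1)) / (x (2*((i:ℤ)-2)) - 1) * F (i-1) / F i :=
        prod_congr rfl fun i _ => hfactor i
    _ = (∏ i ∈ range n, x (2*((i:ℤ)-1))) / ∏ i ∈ range n, (x (2*((i:ℤ)-2)) - 1) := by
        rw [hFper.prod_range_mul_div_sub_one hF0, prod_div_distrib]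
    _ = ∏ i ∈ range n, x (2*i) / (x (2*i) - 1) := by
        rw [prod_div_distrib]
        congr 1
        · exact hx2per.prod_range_sub 1
        · exact (hx2per.comp (· - 1)).prod_range_sub 2

theorem stmt14 (n : ℕ) (hn : 2 ≤ n) (x x' : ℤ → ℝ)
    (hper : ∀ j : ℤ, x (j + 2*n) = x j)
    (hdenom_even : ∀ i : ℤ,
      x (2*i-2) * x (2*i-1) - (1 - x (2*i+1)) * (1 - x (2*i-4)) ≠ 0)
    (hdenom_odd : ∀ i : ℤ,
      x (2*i+2) * x (2*i+3) - (1 - x (2*i+5)) * (1 - x (2*i)) ≠ 0)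
    (hx_even : ∀ i : ℤ, x (2*i) - 1 ≠ 0)
    (hx'_even : ∀ i : ℤ, x' (2*i) - 1 ≠ 0)
    (heven : ∀ i : ℤ, x' (2*i) =
      x (2*i-2) * (x (2*i-4) + x (2*i-1) - 1)
        / (x (2*i-2) * x (2*i-1) - (1 - x (2*i+1)) * (1 - x (2*i-4))))
    (hodd : ∀ i : ℤ, x' (2*i+1) =
      x (2*i+3) * (x (2*i+2) + x (2*i+5) - 1)
        / (x (2*i+2) * x (2*i+3) - (1 - x (2*i+5)) * (1 - x (2*i)))) :
    ∏ i ∈ Finset.range n, x' (2*i) / (x' (2*i) - 1)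
      = ∏ i ∈ Finset.range n, x (2*i) / (x (2*i) - 1) :=
  stmt14_general n x x' hper hdenom_even hx'_even heven
end

section
/- Let (x_j^{(m)})_{j∈ℤ/2n, m∈ℕ} be a family of reals with x_{2i}^{(m)} ∈ (1,∞) and x_{2i+1}^{(m)} ∈ (0,1) for all i and m, and suppose the products F₃^{(m)} = ∏_{i=0}^{n-1} x_{2i}^{(m)}/x_{2i+1}^{(m)} are all equal to F₃^{(0)}, and F₂^{(m)} = ∏_{i=0}^{n-1} x_{2i+1}^{(m)}/(x_{2i+1}^{(m)}−1) are all equal to F₂^{(0)}. Then there exist a, b with 0 < a ≤ b < 1 such that x_{2i+1}^{(m)} ∈ [a,b] for all i and all m. -/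
open scoped BigOperators

theorem stmt16 (n : ℕ) (hn : 2 ≤ n) (x : ℕ → ℕ → ℝ)
    (hK : ∀ m, ∀ i < n, x m (2*i) ∈ Set.Ioi (1:ℝ))
    (hJ : ∀ m, ∀ i < n, x m (2*i+1) ∈ Set.Ioo (0:ℝ) 1)
    (hF3 : ∀ m, ∏ i ∈ Finset.range n, x m (2*i) / x m (2*i+1)
      = ∏ i ∈ Finset.range n, x 0 (2*i) / x 0 (2*i+1))
    (hF2 : ∀ m, ∏ i ∈ Finset.range n, x m (2*i+1) / (x m (2*i+1) - 1)
      = ∏ i ∈ Finset.range n, x 0 (2*i+1) / (x 0 (2*i+1) - 1)) :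
    ∃ a b : ℝ, 0 < a ∧ a ≤ b ∧ b < 1 ∧
      ∀ m, ∀ i < n, x m (2*i+1) ∈ Set.Icc a b := by
  have hn0 : 0 < n := by omega
  set C3 := ∏ i ∈ Finset.range n, x 0 (2*i) / x 0 (2*i+1) with hC3def
  have hC3pos : 0 < C3 := by
    apply Finset.prod_pos
    intro i hi
    rw [Finset.mem_range] at hi
    exact div_pos (lt_trans one_pos (hK 0 i hi)) ((hJ 0 i hi).1)
  -- lower bound
  have hlow : ∀ m, ∀ j, j < n → 1 / C3 ≤ x m (2*j+1) := by
    intro m j hj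
    have hxj := hJ m j hj
    have hxk := hK m j hj
    have hfpos : ∀ i ∈ Finset.range n, (1:ℝ) < x m (2*i)/x m (2*i+1) := by
      intro i hi
      rw [Finset.mem_range] at hi
      exact (one_lt_div (hJ m i hi).1).mpr (lt_trans (hJ m i hi).2 (hK m i hi))
    have hprod : x m (2*j)/x m (2*j+1)
        * ∏ i ∈ (Finset.range n).erase j, x m (2*i)/x m (2*i+1) = C3 :=
      (Finset.mul_prod_erase (Finset.range n) (fun i => x m (2*i)/x m (2*i+1))
        (Finset.mem_range.mpr hj)).trans (hF3 m)
    have herase : (1:ℝ) ≤ ∏ i ∈ (Finset.range n).erase j, x m (2*i)/x m (2*i+1) := by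
      have := Finset.prod_le_prod (s := (Finset.range n).erase j)
        (f := fun _ => (1:ℝ)) (g := fun i => x m (2*i)/x m (2*i+1))
        (fun i _ => zero_le_one) (fun i hi => (hfpos i (Finset.mem_of_mem_erase hi)).le)
      simpa using this
    have hpos : 0 < x m (2*j)/x m (2*j+1) := div_pos (lt_trans one_pos hxk) hxj.1
    have hfj : x m (2*j)/x m (2*j+1) ≤ C3 := by nlinarith
    have h1 : 1 / x m (2*j+1) ≤ C3 := by
      calc 1 / x m (2*j+1) ≤ x m (2*j) / x m (2*j+1) := by
            gcongr
            · exact hxj.1.le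
            · exact hxk.le
        _ ≤ C3 := hfj
    rw [div_le_iff₀ hxj.1] at h1
    rw [div_le_iff₀ hC3pos]
    nlinarith
  set a := 1 / C3 with hadef
  have hapos : 0 < a := by positivity
  have ha1 : a < 1 := lt_of_le_of_lt (hlow 0 0 hn0) (hJ 0 0 hn0).2
  -- F2 with positive factors
  have key : ∀ m, ∏ i ∈ Finset.range n, x m (2*i+1) / (1 - x m (2*i+1))
      = (-1:ℝ)^n * ∏ i ∈ Finset.range n, x m (2*i+1) / (x m (2*i+1) - 1) := by
    intro m
    have h : ((-1:ℝ))^n = ∏ _i ∈ Finset.range n, (-1:ℝ) := by simp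
    rw [h, ← Finset.prod_mul_distrib]
    apply Finset.prod_congr rfl
    intro i _
    rw [neg_one_mul, ← div_neg, neg_sub]
  have hF2' : ∀ m, ∏ i ∈ Finset.range n, x m (2*i+1) / (1 - x m (2*i+1))
      = ∏ i ∈ Finset.range n, x 0 (2*i+1) / (1 - x 0 (2*i+1)) := by
    intro m; rw [key m, key 0, hF2 m]
  set C2 := ∏ i ∈ Finset.range n, x 0 (2*i+1) / (1 - x 0 (2*i+1)) with hC2def
  have hC2pos : 0 < C2 := by
    apply Finset.prod_pos
    intro i hi
    rw [Finset.mem_range] at hi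
    exact div_pos (hJ 0 i hi).1 (by linarith [(hJ 0 i hi).2])
  set t := a / (1 - a) with htdef
  have htpos : 0 < t := div_pos hapos (by linarith)
  set M := C2 / t ^ (n - 1) with hMdef
  have hMpos : 0 < M := div_pos hC2pos (pow_pos htpos _)
  have hup : ∀ m, ∀ j, j < n → x m (2*j+1) ≤ M / (1 + M) := by
    intro m j hj
    have hxj := hJ m j hj
    have hgpos : ∀ i ∈ Finset.range n, (0:ℝ) < x m (2*i+1) / (1 - x m (2*i+1)) := by
      intro i hi
      rw [Finset.mem_range] at hi
      exact div_pos (hJ m i hi).1 (by linarith [(hJ m i hi).2])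
    have hgt : ∀ i ∈ Finset.range n, t ≤ x m (2*i+1) / (1 - x m (2*i+1)) := by
      intro i hi
      rw [Finset.mem_range] at hi
      have hx := hJ m i hi
      have hax : a ≤ x m (2*i+1) := hlow m i hi
      rw [htdef, div_le_div_iff₀ (by linarith) (by linarith [hx.2])]
      nlinarith
    have hprod : x m (2*j+1) / (1 - x m (2*j+1))
        * ∏ i ∈ (Finset.range n).erase j, x m (2*i+1) / (1 - x m (2*i+1)) = C2 :=
      (Finset.mul_prod_erase (Finset.range n) (fun i => x m (2*i+1) / (1 - x m (2*i+1)))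
        (Finset.mem_range.mpr hj)).trans (hF2' m)
    have herase : t ^ (n-1) ≤ ∏ i ∈ (Finset.range n).erase j, x m (2*i+1) / (1 - x m (2*i+1)) := by
      have hcard : ((Finset.range n).erase j).card = n - 1 := by
        rw [Finset.card_erase_of_mem (Finset.mem_range.mpr hj), Finset.card_range]
      have := Finset.prod_le_prod (s := (Finset.range n).erase j)
        (f := fun _ => t) (g := fun i => x m (2*i+1) / (1 - x m (2*i+1)))
        (fun i _ => htpos.le) (fun i hi => hgt i (Finset.mem_of_mem_erase hi))
      simpa [hcard] using this
    have hgj : x m (2*j+1) / (1 - x m (2*j+1)) ≤ M := by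
      rw [hMdef, le_div_iff₀ (pow_pos htpos _)]
      have hposj : 0 < x m (2*j+1) / (1 - x m (2*j+1)) :=
        hgpos j (Finset.mem_range.mpr hj)
      nlinarith [pow_pos htpos (n-1)]
    rw [div_le_iff₀ (by linarith [hxj.2])] at hgj
    rw [le_div_iff₀ (by linarith : (0:ℝ) < 1 + M)]
    nlinarith
  refine ⟨a, M / (1 + M), hapos, ?_, ?_, ?_⟩
  · exact le_trans (hlow 0 0 hn0) (hup 0 0 hn0)
  · rw [div_lt_one (by linarith)]; linarith
  · intro m i hi
    exact ⟨hlow m i hi, hup m i hi⟩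
end

section
/- Let (x_j^{(m)}) be as follows: x_{2i}^{(m)} ∈ (1,∞) and x_{2i+1}^{(m)} ∈ (0,1) for all i ∈ {0,…,n−1} and m ∈ ℕ, the products F₁^{(m)} = ∏_i x_{2i}^{(m)}/(x_{2i}^{(m)}−1), F₂^{(m)}, and F₃^{(m)} = ∏_i x_{2i}^{(m)}/x_{2i+1}^{(m)} are all independent of m, and suppose (by the previous result) the odd coordinates lie in a fixed compact subinterval [a,b] ⊂ (0,1). Then there exist c, d with 1 < c ≤ d such that x_{2i}^{(m)} ∈ [c,d] for all i and m. Consequently the whole sequence of 2n-tuples lies in a compact subset of ((1,∞)×(0,1))ⁿ. -/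
open scoped BigOperators

theorem stmt17 (n : ℕ) (hn : 2 ≤ n) (x : ℕ → ℕ → ℝ) (a b : ℝ)
    (hK : ∀ m, ∀ i < n, x m (2*i) ∈ Set.Ioi (1:ℝ))
    (hJ : ∀ m, ∀ i < n, x m (2*i+1) ∈ Set.Ioo (0:ℝ) 1)
    (hab : 0 < a ∧ a ≤ b ∧ b < 1)
    (hodd : ∀ m, ∀ i < n, x m (2*i+1) ∈ Set.Icc a b)
    (hF1 : ∀ m, ∏ i ∈ Finset.range n, x m (2*i) / (x m (2*i) - 1)
      = ∏ i ∈ Finset.range n, x 0 (2*i) / (x 0 (2*i) - 1))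
    (hF2 : ∀ m, ∏ i ∈ Finset.range n, x m (2*i+1) / (x m (2*i+1) - 1)
      = ∏ i ∈ Finset.range n, x 0 (2*i+1) / (x 0 (2*i+1) - 1))
    (hF3 : ∀ m, ∏ i ∈ Finset.range n, x m (2*i) / x m (2*i+1)
      = ∏ i ∈ Finset.range n, x 0 (2*i) / x 0 (2*i+1)) :
    ∃ c d : ℝ, 1 < c ∧ c ≤ d ∧
      ∀ m, ∀ i < n, x m (2*i) ∈ Set.Icc c d := by
  set F1 : ℝ := ∏ i ∈ Finset.range n, x 0 (2*i) / (x 0 (2*i) - 1) with hF1def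
  set F3 : ℝ := ∏ i ∈ Finset.range n, x 0 (2*i) / x 0 (2*i+1) with hF3def
  have hn0 : 0 < n := by omega
  -- each F1 factor > 1
  have hfac1 : ∀ m, ∀ i < n, 1 < x m (2*i) / (x m (2*i) - 1) := by
    intro m i hi
    have h := hK m i hi
    simp only [Set.mem_Ioi] at h
    rw [lt_div_iff₀ (by linarith)]
    linarith
  have hfac3 : ∀ m, ∀ i < n, 1 < x m (2*i) / x m (2*i+1) := by
    intro m i hi
    have h := hK m i hi
    have h2 := hJ m i hi
    simp only [Set.mem_Ioi] at h
    simp only [Set.mem_Ioo] at h2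
    rw [lt_div_iff₀ h2.1]
    linarith [h2.2]
  have key : ∀ (g : ℕ → ℝ), (∀ j < n, 1 < g j) → ∀ i < n, g i ≤ ∏ j ∈ Finset.range n, g j := by
    intro g hg i hi
    have hrest : (1:ℝ) ≤ ∏ j ∈ (Finset.range n).erase i, g j := by
      calc (1:ℝ) = ∏ j ∈ (Finset.range n).erase i, 1 := by simp
      _ ≤ ∏ j ∈ (Finset.range n).erase i, g j := by
          apply Finset.prod_le_prod (fun j _ => zero_le_one)
          intro j hj
          exact le_of_lt (hg j (Finset.mem_range.mp (Finset.mem_of_mem_erase hj)))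
    rw [← Finset.mul_prod_erase (Finset.range n) g (Finset.mem_range.mpr hi)]
    exact le_mul_of_one_le_right (le_of_lt (lt_trans one_pos (hg i hi))) hrest
  -- each factor is at most the full product
  have hle1 : ∀ m, ∀ i < n, x m (2*i) / (x m (2*i) - 1) ≤ F1 := by
    intro m i hi
    rw [← hF1 m]
    exact key _ (hfac1 m) i hi
  have hle3 : ∀ m, ∀ i < n, x m (2*i) / x m (2*i+1) ≤ F3 := by
    intro m i hi
    rw [← hF3 m]
    exact key _ (hfac3 m) i hi
  have hF1gt : 1 < F1 := lt_of_lt_of_le (hfac1 0 0 hn0) (hle1 0 0 hn0)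
  have hF3gt : 1 < F3 := lt_of_lt_of_le (hfac3 0 0 hn0) (hle3 0 0 hn0)
  have hbound : ∀ m, ∀ i < n, F1 / (F1 - 1) ≤ x m (2*i) ∧ x m (2*i) ≤ F3 := by
    intro m i hi
    have h := hK m i hi
    simp only [Set.mem_Ioi] at h
    have h2 := hJ m i hi
    simp only [Set.mem_Ioo] at h2
    constructor
    · have hle := hle1 m i hi
      rw [div_le_iff₀ (by linarith)] at hle
      rw [div_le_iff₀ (by linarith)]
      nlinarith
    · have hle := hle3 m i hi
      rw [div_le_iff₀ h2.1] at hle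
      nlinarith [h2.2]
  refine ⟨F1 / (F1 - 1), F3, ?_, ?_, fun m i hi => ⟨(hbound m i hi).1, (hbound m i hi).2⟩⟩
  · rw [lt_div_iff₀ (by linarith)]; linarith
  · exact le_trans (hbound 0 0 hn0).1 (hbound 0 0 hn0).2
end
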